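/- arXiv:alg-geom/9411013 — 2 statements merged into one kernel-verified Lean document; each statement's English description precedes it below -/
import Mathlib

section
/- (Proposition 3.2) Let Â be a color class of an undirected graph G = (V,E) and let X be a partitive set of G with X ⊊ Ã (proper inclusion). Then there exists a vertex a ∈ Ã∖X such that (a,x) ∈ Â for every x ∈ X. -/
open Set

namespace TransOrient

variable {V : Type*}

/-- `E` is the edge set of an undirected graph on the vertex type `V`:
an irreflexive and symmetric relation, given as a set of ordered pairs. -/
def IsGraph (E : Set (V × V)) : Prop :=
  (∀ a : V, (a, a) ∉ E) ∧ (∀ a b : V, (a, b) ∈ E ↔ (b, a) ∈ E)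

/-- The forcing relation `Γ` on directed edges:
`(a,b) Γ (a',b')` iff (`a = a'` and `(b,b') ∉ E`) or (`b = b'` and `(a,a') ∉ E`). -/
def Gamma (E : Set (V × V)) (e e' : V × V) : Prop :=
  e ∈ E ∧ e' ∈ E ∧
    ((e.1 = e'.1 ∧ (e.2, e'.2) ∉ E) ∨ (e.2 = e'.2 ∧ (e.1, e'.1) ∉ E))

/-- The implication classes of `G = (V,E)`: equivalence classes on `E` of
the reflexive-transitive closure of `Γ`. -/
def IsImplicationClass (E : Set (V × V)) (A : Set (V × V)) : Prop :=
  ∃ e ∈ E, A = {e' | Relation.ReflTransGen (Gamma E) e e'}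

/-- `A⁻¹ = {(b,a) : (a,b) ∈ A}`. -/
def inv (A : Set (V × V)) : Set (V × V) := {p | (p.2, p.1) ∈ A}

/-- The color class `Â = A ∪ A⁻¹` of an implication class `A`. -/
def hat (A : Set (V × V)) : Set (V × V) := A ∪ inv A

/-- `Ã`: the set of vertices incident to an edge of `A`. -/
def tilde (A : Set (V × V)) : Set V := {v | ∃ w, (v, w) ∈ A ∨ (w, v) ∈ A}

/-- A transitive orientation `E'` of a symmetric edge set `F`:
`E' ⊆ F`, `E' ∩ E'⁻¹ = ∅`, `E' ∪ E'⁻¹ = F` and `E'` is transitive. -/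
def IsTransOrientation (F E' : Set (V × V)) : Prop :=
  E' ⊆ F ∧ E' ∩ inv E' = ∅ ∧ E' ∪ inv E' = F ∧
    ∀ a b c : V, (a, b) ∈ E' → (b, c) ∈ E' → (a, c) ∈ E'

/-- `G` is a comparability graph if `E` admits a transitive orientation. -/
def IsComparability (E : Set (V × V)) : Prop :=
  ∃ E' : Set (V × V), IsTransOrientation E E'

/-- `E(X)`: the set of edges of `E` with both endpoints in `X`. -/
def edgesOn (E : Set (V × V)) (X : Set V) : Set (V × V) :=
  {p ∈ E | p.1 ∈ X ∧ p.2 ∈ X}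

/-- `X` is a partitive set of `G = (V,E)`. -/
def IsPartitive (E : Set (V × V)) (X : Set V) : Prop :=
  ∀ a ∈ X, ∀ b ∈ X, ∀ c ∉ X, ((a, c) ∈ E ↔ (b, c) ∈ E)

/-- `X` is a "strong" partitive set of `G = (V,E)`. -/
def IsStrongPartitive (E : Set (V × V)) (X : Set V) : Prop :=
  IsPartitive E X ∧
    ∀ Y : Set V, IsPartitive E Y → (Y ∩ X).Nonempty → X ⊆ Y ∨ Y ⊆ X

/-- `X` is a maximal "strong" partitive set of `G = (V,E)`: a strong partitive
set different from `V` which is maximal, for inclusion, among the strong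
partitive sets different from `V`. -/
def IsMaxStrongPartitive (E : Set (V × V)) (X : Set V) : Prop :=
  IsStrongPartitive E X ∧ X ≠ Set.univ ∧
    ∀ Y : Set V, IsStrongPartitive E Y → Y ≠ Set.univ → X ⊆ Y → X = Y

/-- `X` is a partitive set of the induced subgraph `G(W) = (W, E(W))`. -/
def IsPartitiveIn (E : Set (V × V)) (W : Set V) (X : Set V) : Prop :=
  X ⊆ W ∧ ∀ a ∈ X, ∀ b ∈ X, ∀ c ∈ W \ X,
    ((a, c) ∈ edgesOn E W ↔ (b, c) ∈ edgesOn E W)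

/-- `X` is a "strong" partitive set of the induced subgraph `G(W)`. -/
def IsStrongPartitiveIn (E : Set (V × V)) (W : Set V) (X : Set V) : Prop :=
  IsPartitiveIn E W X ∧
    ∀ Y : Set V, IsPartitiveIn E W Y → (Y ∩ X).Nonempty → X ⊆ Y ∨ Y ⊆ X

/-- `X` is a maximal "strong" partitive set of the induced subgraph `G(W)`. -/
def IsMaxStrongPartitiveIn (E : Set (V × V)) (W : Set V) (X : Set V) : Prop :=
  IsStrongPartitiveIn E W X ∧ X ≠ W ∧
    ∀ Y : Set V, IsStrongPartitiveIn E W Y → Y ≠ W → X ⊆ Y → X = Y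

/-- Two directed edges lie in the same color class of `G = (V,E)`. -/
def SameColor (E : Set (V × V)) (e e' : V × V) : Prop :=
  ∃ A : Set (V × V), IsImplicationClass E A ∧ e ∈ hat A ∧ e' ∈ hat A

/-- A simplex of `G = (V,E)` given by its (finite, nonempty) vertex set `VS`:
a complete induced subgraph whose edges, for distinct unordered pairs,
lie in distinct color classes of `G`. -/
def IsSimplex (E : Set (V × V)) (VS : Set V) : Prop :=
  VS.Finite ∧ VS.Nonempty ∧
    (∀ a ∈ VS, ∀ b ∈ VS, a ≠ b → (a, b) ∈ E) ∧
    (∀ a ∈ VS, ∀ b ∈ VS, ∀ c ∈ VS, ∀ d ∈ VS, a ≠ b → c ≠ d →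
      SameColor E (a, b) (c, d) → (a = c ∧ b = d) ∨ (a = d ∧ b = c))

/-- The rank of a simplex on `r+1` vertices is `r`. -/
noncomputable def simplexRank (VS : Set V) : ℕ := VS.ncard - 1

/-- A maximal simplex: its vertex set is not properly contained in the
vertex set of another simplex. -/
def IsMaxSimplex (E : Set (V × V)) (VS : Set V) : Prop :=
  IsSimplex E VS ∧ ∀ VS' : Set V, IsSimplex E VS' → VS ⊆ VS' → VS = VS'

/-- The multiplex `M(S)` generated by a simplex with vertex set `VS`:
the union of all color classes of `G` containing an edge of the simplex. -/
def multiplex (E : Set (V × V)) (VS : Set V) : Set (V × V) :=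
  {e | ∃ A : Set (V × V), IsImplicationClass E A ∧ e ∈ hat A ∧
    ∃ a ∈ VS, ∃ b ∈ VS, a ≠ b ∧ (a, b) ∈ hat A}

/-- A maximal multiplex of `G`: a multiplex generated by a maximal simplex. -/
def IsMaxMultiplex (E : Set (V × V)) (M : Set (V × V)) : Prop :=
  ∃ VS : Set V, IsMaxSimplex E VS ∧ M = multiplex E VS

/-- `P` is a partition of the set `W`. -/
def IsPartitionOf (W : Set V) (P : Set (Set V)) : Prop :=
  (∀ X ∈ P, X.Nonempty) ∧ ⋃₀ P = W ∧
    ∀ X ∈ P, ∀ Y ∈ P, X ≠ Y → X ∩ Y = ∅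

/-- Adjacency in the quotient of the induced subgraph `G(W)` by a partition:
two distinct blocks are adjacent iff some pair of representatives is an
edge of `E(W)`. -/
def quotAdj (E : Set (V × V)) (W : Set V) (X Y : Set V) : Prop :=
  X ≠ Y ∧ ∃ x ∈ X, ∃ y ∈ Y, (x, y) ∈ edgesOn E W

/-- A partitive set of an abstract graph with vertex set `W` and adjacency
relation `Adj`. -/
def IsPartitiveGen {α : Type*} (W : Set α) (Adj : α → α → Prop) (X : Set α) : Prop :=
  X ⊆ W ∧ ∀ a ∈ X, ∀ b ∈ X, ∀ c ∈ W \ X, (Adj a c ↔ Adj b c)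

/-- An abstract graph `(W, Adj)` is indecomposable if all its partitive
sets are trivial. -/
def IndecomposableGen {α : Type*} (W : Set α) (Adj : α → α → Prop) : Prop :=
  ∀ X : Set α, IsPartitiveGen W Adj X → X.Subsingleton ∨ X = W

/-- An isomorphism between the graphs `(Vα, Aα)` and `(Vβ, Aβ)`:
a bijection of the vertex sets preserving adjacency in both directions. -/
def GraphIso {α β : Type*} (Vα : Set α) (Aα : α → α → Prop)
    (Vβ : Set β) (Aβ : β → β → Prop) : Prop :=
  ∃ f : α → β, Set.BijOn f Vα Vβ ∧
    ∀ a ∈ Vα, ∀ b ∈ Vα, (Aα a b ↔ Aβ (f a) (f b))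

/-- `(V', E')` is a subgraph of the induced subgraph `G(W)` of `G = (V,E)`. -/
def IsSubgraphOf (E : Set (V × V)) (W : Set V) (V' : Set V) (E' : Set (V × V)) : Prop :=
  V' ⊆ W ∧ E' ⊆ edgesOn E W ∧ (∀ e ∈ E', e.1 ∈ V' ∧ e.2 ∈ V') ∧
    (∀ a b : V, (a, b) ∈ E' ↔ (b, a) ∈ E')

end TransOrient

/-!
A Γ-step cannot lead from an edge inside the partitive set `X` to an edge leaving `X`; as
`Ã ⊄ X`, no edge of `Â` lies inside `X`. Suppose no vertex of `Ã ∖ X` is `Â`-joined to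
all of `X`. Pivoting an `Â`-edge about its endpoint in `X` replaces the outer endpoint by a
non-adjacent one, and two non-adjacent vertices that both see `X` have the same `Â`-neighbourhood
in `X`. Pivoting about the outer endpoint keeps the edge crossing `X`: a pivot onto a vertex
outside `X`, which then does not see `X`, would `Â`-join the outer endpoint to all of `X`.
So all `Â`-edges crossing `X` have outer endpoints with one common `Â`-neighbourhood in `X`.
Every vertex of `X` lies on such an edge, so that neighbourhood is `X`: a contradiction.
-/

open Set Relation

namespace TransOrient

variable {V : Type*} {E A : Set (V × V)} {X : Set V}

lemma IsGraph.symm (hG : IsGraph E) {a b : V} (h : (a, b) ∈ E) : (b, a) ∈ E :=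
  (hG.2 a b).1 h

lemma IsGraph.gamma_symm (hG : IsGraph E) : Std.Symm (Gamma E) where
  symm := by
    rintro e e' ⟨he, he', h | h⟩
    · exact ⟨he', he, .inl ⟨h.1.symm, fun h' => h.2 (hG.symm h')⟩⟩
    · exact ⟨he', he, .inr ⟨h.1.symm, fun h' => h.2 (hG.symm h')⟩⟩

lemma mem_hat_comm {u v : V} : (u, v) ∈ hat A ↔ (v, u) ∈ hat A :=
  or_comm

lemma mem_tilde_of_mem_hat {u v : V} (h : (u, v) ∈ hat A) : u ∈ tilde A :=
  ⟨v, h⟩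

lemma exists_mem_hat_of_mem_tilde {v : V} (h : v ∈ tilde A) : ∃ u, (u, v) ∈ hat A :=
  let ⟨w, hw⟩ := h; ⟨w, hw.symm⟩

namespace IsImplicationClass

lemma subset (hA : IsImplicationClass E A) : A ⊆ E := by
  obtain ⟨e, he, rfl⟩ := hA
  intro f hf
  induction hf with
  | refl => exact he
  | tail _ h _ => exact h.2.1

lemma mem_of_reflTransGen (hA : IsImplicationClass E A) {e f : V × V} (he : e ∈ A)
    (h : ReflTransGen (Gamma E) e f) : f ∈ A := by
  obtain ⟨e₀, -, rfl⟩ := hA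
  exact he.trans h

lemma reflTransGen_of_mem (hG : IsGraph E) (hA : IsImplicationClass E A) {e f : V × V}
    (he : e ∈ A) (hf : f ∈ A) : ReflTransGen (Gamma E) e f := by
  obtain ⟨e₀, -, rfl⟩ := hA
  have := hG.gamma_symm
  exact (Std.Symm.symm _ _ he).trans hf

lemma hat_subset (hG : IsGraph E) (hA : IsImplicationClass E A) : hat A ⊆ E := by
  rintro ⟨u, v⟩ (h | h)
  · exact hA.subset h
  · exact hG.symm (hA.subset h)

lemma mem_hat_of_not_adj (hG : IsGraph E) (hA : IsImplicationClass E A) {u v w : V}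
    (h : (u, v) ∈ hat A) (huw : (u, w) ∈ E) (hvw : (v, w) ∉ E) : (u, w) ∈ hat A := by
  rcases h with h | h
  · exact .inl (hA.mem_of_reflTransGen h (.single ⟨hA.subset h, huw, .inl ⟨rfl, hvw⟩⟩))
  · exact .inr (hA.mem_of_reflTransGen h (.single ⟨hA.subset h, hG.symm huw, .inr ⟨rfl, hvw⟩⟩))

/-- A Γ-step pivots an edge about one endpoint `p`, moving the other endpoint to a non-neighbour. -/
theorem pivot_induction (hG : IsGraph E) (hA : IsImplicationClass E A) {P : V → V → Prop}
    (hP : ∀ u v, P u v → P v u)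
    (hstep : ∀ p q q', (p, q) ∈ hat A → (p, q') ∈ hat A → (q, q') ∉ E → P p q → P p q')
    {u v u' v' : V} (h : (u, v) ∈ hat A) (h' : (u', v') ∈ hat A) (huv : P u v) : P u' v' := by
  have chain : ∀ e ∈ A, P e.1 e.2 → ∀ f, ReflTransGen (Gamma E) e f → P f.1 f.2 := by
    intro e he hPe f hef
    induction hef with
    | refl => exact hPe
    | @tail g f hg hgf ih =>
      have hgA : g ∈ hat A := .inl (hA.mem_of_reflTransGen he hg)
      have hfA : f ∈ hat A := .inl (hA.mem_of_reflTransGen he (hg.tail hgf))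
      obtain ⟨g₁, g₂⟩ := g
      obtain ⟨f₁, f₂⟩ := f
      obtain ⟨-, -, ⟨rfl, hne⟩ | ⟨rfl, hne⟩⟩ := hgf
      · exact hstep _ _ _ hgA hfA hne ih
      · exact hP _ _ (hstep _ _ _ (mem_hat_comm.1 hgA) (mem_hat_comm.1 hfA) hne (hP _ _ ih))
  have onA : ∀ {u v u' v'}, (u, v) ∈ A → (u', v') ∈ A → P u v → P u' v' :=
    fun h h' hPuv => chain _ h hPuv _ (hA.reflTransGen_of_mem hG h h')
  rcases h with h | h <;> rcases h' with h' | h'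
  · exact onA h h' huv
  · exact hP _ _ (onA h h' huv)
  · exact onA h h' (hP _ _ huv)
  · exact hP _ _ (onA h h' (hP _ _ huv))

end IsImplicationClass

namespace IsPartitive

lemma not_mem_of_mem_hat (hG : IsGraph E) (hA : IsImplicationClass E A) (hX : IsPartitive E X)
    (hAX : ¬tilde A ⊆ X) {u v : V} (h : (u, v) ∈ hat A) (hu : u ∈ X) : v ∉ X := by
  intro hv
  obtain ⟨a, haA, haX⟩ := not_subset.1 hAX
  obtain ⟨b, hb⟩ := exists_mem_hat_of_mem_tilde haA
  refine haX (hA.pivot_induction hG (P := fun u v => u ∈ X ∧ v ∈ X) (fun _ _ => And.symm)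
    ?_ h hb ⟨hu, hv⟩).2
  rintro p q q' - hpq' hqq' ⟨hp, hq⟩
  exact ⟨hp, by_contra fun hq' => hqq' ((hX p hp q hq q' hq').1 (hA.hat_subset hG hpq'))⟩

lemma mem_hat_of_not_adj (hG : IsGraph E) (hA : IsImplicationClass E A) (hX : IsPartitive E X)
    {c c' x x₀ : V} (hc' : c' ∉ X) (hx : x ∈ X) (hx₀ : x₀ ∈ X) (hx₀c' : (x₀, c') ∈ E)
    (hcc' : (c, c') ∉ E) (h : (c, x) ∈ hat A) : (c', x) ∈ hat A :=
  mem_hat_comm.1 <| hA.mem_hat_of_not_adj hG (mem_hat_comm.1 h) ((hX x₀ hx₀ x hx c' hc').1 hx₀c')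
    hcc'

lemma forall_mem_hat_of_not_adj (hG : IsGraph E) (hA : IsImplicationClass E A)
    (hX : IsPartitive E X) {p q x₀ : V} (hp : p ∉ X) (hq : q ∉ X) (hx₀ : x₀ ∈ X)
    (hx₀p : (x₀, p) ∈ E) (hx₀q : (x₀, q) ∉ E) (hpq : (p, q) ∈ hat A) :
    ∀ x ∈ X, (p, x) ∈ hat A := fun x hx =>
  hA.mem_hat_of_not_adj hG hpq (hG.symm ((hX x₀ hx₀ x hx p hp).1 hx₀p))
    fun hqx => hx₀q ((hX x₀ hx₀ x hx q hq).2 (hG.symm hqx))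

theorem mem_hat_of_forall_exists_not_mem_hat (hG : IsGraph E) (hA : IsImplicationClass E A)
    (hX : IsPartitive E X) (hAX : ¬tilde A ⊆ X)
    (hnf : ∀ a ∈ tilde A \ X, ∃ x ∈ X, (a, x) ∉ hat A)
    {c x c' x' : V} (h : (c, x) ∈ hat A) (hx : x ∈ X) (h' : (c', x') ∈ hat A) (hx' : x' ∈ X) :
    (c, x') ∈ hat A := by
  have outside {u v : V} (huv : (u, v) ∈ hat A) (hu : u ∈ X) : v ∉ X :=
    hX.not_mem_of_mem_hat hG hA hAX huv hu
  let Q (u v : V) : Prop := u ∈ X → ∀ y ∈ X, (v, y) ∈ hat A → (c, y) ∈ hat A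
  have hstep (p q q' : V) (hpq : (p, q) ∈ hat A) (hpq' : (p, q') ∈ hat A) (hqq' : (q, q') ∉ E)
      (hQ : Q p q ∧ Q q p) : Q p q' ∧ Q q' p := by
    refine ⟨fun hp y hy hq'y => hQ.1 hp y hy ?_, fun hq' y hy hpy => ?_⟩
    · exact hX.mem_hat_of_not_adj hG hA (outside hpq hp) hy hp
        (hA.hat_subset hG hpq) (fun h => hqq' (hG.symm h)) hq'y
    have hp : p ∉ X := outside (mem_hat_comm.1 hpq') hq'
    by_cases hq : q ∈ X
    · exact hQ.2 hq y hy hpy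
    obtain ⟨z, hz, hpz⟩ := hnf p ⟨mem_tilde_of_mem_hat hpq, hp⟩
    exact absurd (hX.forall_mem_hat_of_not_adj hG hA hp hq hq' (hG.symm (hA.hat_subset hG hpq'))
      (fun h => hqq' (hG.symm h)) hpq z hz) hpz
  have hQ : Q c' x' ∧ Q x' c' := hA.pivot_induction hG (P := fun u v => Q u v ∧ Q v u)
    (fun _ _ => And.symm) hstep h h'
    ⟨fun hc => absurd hc (outside (mem_hat_comm.1 h) hx), fun _ _ _ => id⟩
  exact hQ.2 hx' x' hx' h'

end IsPartitive

end TransOrient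

open TransOrient in
/-- **(Proposition 3.2)** If `Â` is a color class and `X` a partitive set with
`X ⊊ Ã`, then some `a ∈ Ã ∖ X` satisfies `(a,x) ∈ Â` for every `x ∈ X`. -/
theorem exists_vertex_color_related_to_partitive
    {V : Type*} (E : Set (V × V)) (hG : IsGraph E)
    (A : Set (V × V)) (hA : IsImplicationClass E A)
    (X : Set V) (hX : IsPartitive E X) (hss : X ⊂ tilde A) :
    ∃ a ∈ tilde A \ X, ∀ x ∈ X, (a, x) ∈ hat A := by
  have hAX : ¬tilde A ⊆ X := hss.2
  by_contra! hnf
  obtain ⟨a, ha⟩ := exists_of_ssubset hss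
  obtain ⟨x₀, hx₀, -⟩ := hnf a ha
  obtain ⟨c, hc⟩ := exists_mem_hat_of_mem_tilde (hss.subset hx₀)
  have hcX : c ∉ X := hX.not_mem_of_mem_hat hG hA hAX (mem_hat_comm.1 hc) hx₀
  obtain ⟨x, hx, hcx⟩ := hnf c ⟨mem_tilde_of_mem_hat hc, hcX⟩
  obtain ⟨c', hc'⟩ := exists_mem_hat_of_mem_tilde (hss.subset hx)
  exact hcx (hX.mem_hat_of_forall_exists_not_mem_hat hG hA hAX hnf hc hx₀ hc' hx)
end

section
/- (Theorem 3.4) Let X and Y be strong partitive sets of an undirected graph G = (V,E) with X ∩ Y = ∅. If Â and B̂ are color classes of G each containing an edge with one endpoint in X and the other endpoint in Y, then Â = B̂; that is, X and Y can be related to each other by at most one color class. -/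
open Set

/-! Let `x₁, x₂ ∈ X` and `y ∉ X` with `x₁y, x₂y ∈ E`. The heart of the proof is that these two
edges have the same colour. If `x₁x₂ ∉ E` they are `Γ`-related. Otherwise, if their colour classes
differ, the triangle lemma makes every vertex incident to the colour class `C` of `x₁y` adjacent
to `x₂`, so `x₂` lies outside the component `Z` of `x₁` in the graph of `C`-edges. Such a
component is always partitive: a vertex outside `Z` adjacent to one end of a `C`-edge but not to
the other would be joined to that end by a `C`-edge, through one `Γ`-step. Since `Z` contains
`x₁ ∈ X` and `y ∉ X` but not `x₂ ∈ X`, this contradicts the strength of `X`.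

Applying this to `X` and then to `Y` moves a crossing edge `xa ya` to `xb ya` and then to `xb yb`
without changing its colour class. -/

namespace TransOrient

variable {V : Type*} {E : Set (V × V)}

def implicationClass (E : Set (V × V)) (e : V × V) : Set (V × V) :=
  {e' | Relation.ReflTransGen (Gamma E) e e'}

def colorClass (E : Set (V × V)) (e : V × V) : Set (V × V) :=
  hat (implicationClass E e)

theorem Gamma.symm (hG : IsGraph E) {e e' : V × V} (h : Gamma E e e') : Gamma E e' e := by
  obtain ⟨he, he', ⟨h₁, h₂⟩ | ⟨h₁, h₂⟩⟩ := h
  · exact ⟨he', he, Or.inl ⟨h₁.symm, fun h => h₂ ((hG.2 _ _).mp h)⟩⟩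
  · exact ⟨he', he, Or.inr ⟨h₁.symm, fun h => h₂ ((hG.2 _ _).mp h)⟩⟩

theorem Gamma.swap (hG : IsGraph E) {e e' : V × V} (h : Gamma E e e') :
    Gamma E e.swap e'.swap := by
  obtain ⟨he, he', h | h⟩ := h
  · exact ⟨(hG.2 _ _).mp he, (hG.2 _ _).mp he', Or.inr h⟩
  · exact ⟨(hG.2 _ _).mp he, (hG.2 _ _).mp he', Or.inl h⟩

theorem mem_colorClass_self (e : V × V) : e ∈ colorClass E e :=
  Or.inl Relation.ReflTransGen.refl

theorem swap_mem_colorClass {e e' : V × V} (h : e' ∈ colorClass E e) :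
    e'.swap ∈ colorClass E e :=
  h.symm

theorem mem_colorClass_of_gamma (hG : IsGraph E) {e e' e'' : V × V}
    (h : e' ∈ colorClass E e) (hΓ : Gamma E e' e'') : e'' ∈ colorClass E e := by
  rcases h with h | h
  · exact Or.inl (h.tail hΓ)
  · exact Or.inr (h.tail (hΓ.swap hG))

theorem colorClass_subset_of_gamma_closed {S : Set (V × V)} {e : V × V} (he : e ∈ S)
    (hswap : ∀ p ∈ S, p.swap ∈ S) (hΓ : ∀ p ∈ S, ∀ q, Gamma E p q → q ∈ S) :
    colorClass E e ⊆ S := by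
  have hclass : ∀ e', Relation.ReflTransGen (Gamma E) e e' → e' ∈ S := fun e' h => by
    induction h with
    | refl => exact he
    | tail _ hpq hp => exact hΓ _ hp _ hpq
  rintro e' (h | h)
  · exact hclass e' h
  · exact hswap _ (hclass _ h)

theorem mem_of_mem_colorClass (hG : IsGraph E) {e e' : V × V} (he : e ∈ E)
    (h : e' ∈ colorClass E e) : e' ∈ E :=
  colorClass_subset_of_gamma_closed he (fun _ hp => (hG.2 _ _).mp hp)
    (fun _ _ _ hpq => hpq.2.1) h

theorem colorClass_subset_of_mem (hG : IsGraph E) {e e' : V × V} (h : e' ∈ colorClass E e) :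
    colorClass E e' ⊆ colorClass E e :=
  colorClass_subset_of_gamma_closed h (fun _ => swap_mem_colorClass)
    (fun _ hp _ hpq => mem_colorClass_of_gamma hG hp hpq)

theorem mem_colorClass_comm (hG : IsGraph E) {e e' : V × V} (h : e' ∈ colorClass E e) :
    e ∈ colorClass E e' := by
  have : Std.Symm (Gamma E) := ⟨fun _ _ => Gamma.symm hG⟩
  rcases h with h | h
  · exact Or.inl (Std.Symm.symm _ _ h)
  · exact Or.inr (Relation.ReflTransGen.lift Prod.swap (fun _ _ => Gamma.swap hG) _ _
      (Std.Symm.symm _ _ h))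

theorem colorClass_eq_of_mem (hG : IsGraph E) {e e' : V × V} (h : e' ∈ colorClass E e) :
    colorClass E e' = colorClass E e :=
  (colorClass_subset_of_mem hG h).antisymm (colorClass_subset_of_mem hG (mem_colorClass_comm hG h))

theorem colorClass_eq_of_mem_of_mem (hG : IsGraph E) {e₁ e₂ e : V × V}
    (h₁ : e ∈ colorClass E e₁) (h₂ : e ∈ colorClass E e₂) : colorClass E e₁ = colorClass E e₂ :=
  (colorClass_eq_of_mem hG h₁).symm.trans (colorClass_eq_of_mem hG h₂)

theorem colorClass_swap (hG : IsGraph E) (e : V × V) : colorClass E e.swap = colorClass E e :=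
  colorClass_eq_of_mem hG (swap_mem_colorClass (mem_colorClass_self e))

theorem IsImplicationClass.hat_subset_s8 (hG : IsGraph E) {A : Set (V × V)}
    (hA : IsImplicationClass E A) : hat A ⊆ E := by
  obtain ⟨e, he, rfl⟩ := hA
  exact fun _ => mem_of_mem_colorClass hG he

theorem IsImplicationClass.hat_eq_colorClass (hG : IsGraph E) {A : Set (V × V)}
    (hA : IsImplicationClass E A) {e : V × V} (h : e ∈ hat A) : hat A = colorClass E e := by
  obtain ⟨e₀, -, rfl⟩ := hA
  exact (colorClass_eq_of_mem hG h).symm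

theorem IsPartitive.colorClass_subset_edgesOn (hG : IsGraph E) {X : Set V}
    (hX : IsPartitive E X) {e : V × V} (he : e ∈ edgesOn E X) :
    colorClass E e ⊆ edgesOn E X := by
  refine colorClass_subset_of_gamma_closed he
    (fun p ⟨hp, hp₁, hp₂⟩ => ⟨(hG.2 _ _).mp hp, hp₂, hp₁⟩) ?_
  rintro ⟨p₁, p₂⟩ ⟨hp, hp₁, hp₂⟩ ⟨q₁, q₂⟩ ⟨-, hq, ⟨rfl, hpq⟩ | ⟨rfl, hpq⟩⟩
  · exact ⟨hq, hp₁, by_contra fun hq₂ => hpq ((hX _ hp₁ _ hp₂ _ hq₂).mp hq)⟩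
  · exact ⟨hq, by_contra fun hq₁ => hpq ((hX _ hp₂ _ hp₁ _ hq₁).mp ((hG.2 _ _).mp hq)), hp₂⟩

/-- Golumbic's triangle lemma. -/
theorem triangle_lemma (hG : IsGraph E) {a b c : V} (hab : (a, b) ∈ E) (hac : (a, c) ∈ E)
    (hb : (a, b) ∉ colorClass E (b, c)) (hc : (a, c) ∉ colorClass E (b, c))
    {e : V × V} (h : e ∈ implicationClass E (b, c)) :
    (a, e.1) ∈ colorClass E (a, b) ∧ (a, e.2) ∈ colorClass E (a, c) := by
  have hb' : ∀ x, (a, x) ∈ colorClass E (a, b) → (a, x) ∉ colorClass E (b, c) := fun x h h' =>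
    hb (colorClass_eq_of_mem_of_mem hG h h' ▸ mem_colorClass_self _)
  have hc' : ∀ x, (a, x) ∈ colorClass E (a, c) → (a, x) ∉ colorClass E (b, c) := fun x h h' =>
    hc (colorClass_eq_of_mem_of_mem hG h h' ▸ mem_colorClass_self _)
  induction h with
  | refl => exact ⟨mem_colorClass_self _, mem_colorClass_self _⟩
  | @tail m n hm hmn ih =>
    obtain ⟨ihb, ihc⟩ := ih
    have hn : n ∈ implicationClass E (b, c) := hm.tail hmn
    obtain ⟨p, q⟩ := m
    obtain ⟨p', q'⟩ := n
    obtain ⟨hpq, hpq', ⟨rfl, hqq'⟩ | ⟨rfl, hpp'⟩⟩ := hmn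
    · -- otherwise `(p, q') Γ (p, a)` would give `(a, p)` the colour of `(b, c)`
      have haq' : (a, q') ∈ E := by
        by_contra haq'
        have hpa : (p, a) ∈ E := (hG.2 _ _).mp (mem_of_mem_colorClass hG hab ihb)
        have hq'a : (q', a) ∉ E := fun h => haq' ((hG.2 _ _).mp h)
        exact hb' p ihb (Or.inr (hn.tail ⟨hpq', hpa, Or.inl ⟨rfl, hq'a⟩⟩))
      exact ⟨ihb, mem_colorClass_of_gamma hG ihc ⟨mem_of_mem_colorClass hG hac ihc, haq',
        Or.inl ⟨rfl, hqq'⟩⟩⟩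
    · have hap' : (a, p') ∈ E := by
        by_contra hap'
        have haq : (a, q) ∈ E := mem_of_mem_colorClass hG hac ihc
        have hp'a : (p', a) ∉ E := fun h => hap' ((hG.2 _ _).mp h)
        exact hc' q ihc (Or.inl (hn.tail ⟨hpq', haq, Or.inr ⟨rfl, hp'a⟩⟩))
      exact ⟨mem_colorClass_of_gamma hG ihb ⟨mem_of_mem_colorClass hG hab ihb, hap',
        Or.inl ⟨rfl, hpp'⟩⟩, ihc⟩

theorem adj_of_mem_colorClass_of_triangle (hG : IsGraph E) {a b c : V} (hab : (a, b) ∈ E)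
    (hac : (a, c) ∈ E) (hb : (a, b) ∉ colorClass E (b, c)) (hc : (a, c) ∉ colorClass E (b, c))
    {e : V × V} (h : e ∈ colorClass E (b, c)) : (a, e.1) ∈ E ∧ (a, e.2) ∈ E := by
  have key : ∀ e ∈ implicationClass E (b, c), (a, e.1) ∈ E ∧ (a, e.2) ∈ E := fun e h =>
    have ⟨h₁, h₂⟩ := triangle_lemma hG hab hac hb hc h
    ⟨mem_of_mem_colorClass hG hab h₁, mem_of_mem_colorClass hG hac h₂⟩
  rcases h with h | h
  · exact key e h
  · exact (key _ h).symm

def colorComponent (E : Set (V × V)) (e : V × V) (v : V) : Set V :=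
  {w | Relation.ReflTransGen (fun u w => (u, w) ∈ colorClass E e) v w}

theorem isPartitive_colorComponent (hG : IsGraph E) {e : V × V} (he : e ∈ E) (v : V) :
    IsPartitive E (colorComponent E e v) := by
  set Z := colorComponent E e v
  have hstep : ∀ u ∈ Z, ∀ w, (u, w) ∈ colorClass E e → ∀ c ∉ Z, (u, c) ∈ E → (w, c) ∈ E := by
    intro u hu w huw c hc huc
    by_contra hwc
    exact hc (hu.tail (mem_colorClass_of_gamma hG huw
      ⟨mem_of_mem_colorClass hG he huw, huc, Or.inl ⟨rfl, hwc⟩⟩))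
  have hbase : ∀ a ∈ Z, ∀ c ∉ Z, ((v, c) ∈ E ↔ (a, c) ∈ E) := by
    intro a ha c hc
    induction ha with
    | refl => rfl
    | @tail u w hu huw ih =>
      exact ih.trans ⟨hstep u hu w huw c hc,
        hstep w (hu.tail huw) u (swap_mem_colorClass huw) c hc⟩
  exact fun a ha b hb c hc => (hbase a ha c hc).symm.trans (hbase b hb c hc)

theorem IsStrongPartitive.mem_colorClass_of_adj (hG : IsGraph E) {X : Set V}
    (hX : IsStrongPartitive E X) {x₁ x₂ y : V} (hx₁ : x₁ ∈ X) (hx₂ : x₂ ∈ X) (hy : y ∉ X)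
    (h₁ : (x₁, y) ∈ E) (h₂ : (x₂, y) ∈ E) : (x₂, y) ∈ colorClass E (x₁, y) := by
  by_cases h₁₂ : (x₁, x₂) ∈ E
  swap
  · exact mem_colorClass_of_gamma hG (mem_colorClass_self _) ⟨h₁, h₂, Or.inr ⟨rfl, h₁₂⟩⟩
  by_contra hne
  have h₂₁ : (x₂, x₁) ∈ E := (hG.2 _ _).mp h₁₂
  have hint : (x₂, x₁) ∉ colorClass E (x₁, y) := fun h =>
    hy (hX.1.colorClass_subset_edgesOn hG ⟨h₂₁, hx₂, hx₁⟩ (mem_colorClass_comm hG h)).2.2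
  set Z := colorComponent E (x₁, y) x₁
  have hx₂Z : x₂ ∉ Z := by
    intro hx₂Z
    rcases Relation.ReflTransGen.cases_tail hx₂Z with rfl | ⟨u, -, hu⟩
    · exact hG.1 _ h₁₂
    · exact hG.1 _ (adj_of_mem_colorClass_of_triangle hG h₂₁ h₂ hint hne hu).2
  have hyZ : y ∈ Z := Relation.ReflTransGen.single (mem_colorClass_self _)
  rcases hX.2 Z (isPartitive_colorComponent hG h₁ x₁) ⟨x₁, Relation.ReflTransGen.refl, hx₁⟩ with
    hXZ | hZX
  · exact hx₂Z (hXZ hx₂)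
  · exact hy (hZX hyZ)

end TransOrient

open TransOrient in
/-- **(Theorem 3.4)** Two disjoint strong partitive sets are related to each
other by at most one color class. -/
theorem strong_partitive_related_by_at_most_one_color
    {V : Type*} (E : Set (V × V)) (hG : IsGraph E)
    (X Y : Set V) (hX : IsStrongPartitive E X) (hY : IsStrongPartitive E Y)
    (hdisj : X ∩ Y = ∅)
    (A B : Set (V × V)) (hA : IsImplicationClass E A) (hB : IsImplicationClass E B)
    (hAedge : ∃ x ∈ X, ∃ y ∈ Y, (x, y) ∈ hat A)
    (hBedge : ∃ x ∈ X, ∃ y ∈ Y, (x, y) ∈ hat B) :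
    hat A = hat B := by
  obtain ⟨xa, hxa, ya, hya, hAe⟩ := hAedge
  obtain ⟨xb, hxb, yb, hyb, hBe⟩ := hBedge
  have hyaX : ya ∉ X := fun h => hdisj.subset ⟨h, hya⟩
  have hxbY : xb ∉ Y := fun h => hdisj.subset ⟨hxb, h⟩
  have ha : (xa, ya) ∈ E := hA.hat_subset_s8 hG hAe
  have hb : (xb, yb) ∈ E := hB.hat_subset_s8 hG hBe
  have hxbya : (xb, ya) ∈ E := (hX.1 xa hxa xb hxb ya hyaX).mp ha
  calc hat A = colorClass E (xa, ya) := hA.hat_eq_colorClass hG hAe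
    _ = colorClass E (xb, ya) :=
      (colorClass_eq_of_mem hG (hX.mem_colorClass_of_adj hG hxa hxb hyaX ha hxbya)).symm
    _ = colorClass E (ya, xb) := (colorClass_swap hG (xb, ya)).symm
    _ = colorClass E (yb, xb) := (colorClass_eq_of_mem hG
      (hY.mem_colorClass_of_adj hG hya hyb hxbY ((hG.2 _ _).mp hxbya) ((hG.2 _ _).mp hb))).symm
    _ = colorClass E (xb, yb) := colorClass_swap hG (xb, yb)
    _ = hat B := (hB.hat_eq_colorClass hG hBe).symm
end
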